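/- Let K be a number field of degree n and let p ≠ 2 be a rational prime that is tamely ramified in K, is ε-split homogeneous in K with common ramification index e, has an odd number g of primes of O_K lying above it, and satisfies that F = n/e is odd. Then α_p^K ≡ e modulo squares of p-adic units; equivalently, the integer α_p^K · e is a nonzero quadratic residue modulo p. -/

import Mathlib

open NumberField Module

/-- The set of primes of `𝓞 K` lying above the rational prime `p`. -/
def primesAbove (K : Type*) [Field K] [NumberField K] (p : ℕ) : Set (Ideal (𝓞 K)) :=
  {P | P.IsPrime ∧ (p : 𝓞 K) ∈ P}

/-- The ramification index of `P` over `p`. -/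
noncomputable def ramIdx (K : Type*) [Field K] [NumberField K] (p : ℕ)
    (P : Ideal (𝓞 K)) : ℕ :=
  Ideal.ramificationIdx' (Ideal.span {(p : ℤ)}) P

/-- The residue (inertia) degree of `P` over `p`. -/
noncomputable def resDeg (K : Type*) [Field K] [NumberField K] (p : ℕ)
    (P : Ideal (𝓞 K)) : ℕ :=
  Ideal.inertiaDeg' (Ideal.span {(p : ℤ)}) P

/-- `p` is ramified in `K`. -/
def IsRamifiedIn (K : Type*) [Field K] [NumberField K] (p : ℕ) : Prop :=
  ∃ P ∈ primesAbove K p, 2 ≤ ramIdx K p P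

/-- `K` is tame: no rational prime is wildly ramified. -/
def IsTame (K : Type*) [Field K] [NumberField K] : Prop :=
  ∀ p : ℕ, p.Prime → ∀ P ∈ primesAbove K p, ¬ (p ∣ ramIdx K p P)

/-- `p` is ε-split homogeneous in `K`: all primes above `p` share a ramification index. -/
def IsEpsSplitHomogeneous (K : Type*) [Field K] [NumberField K] (p : ℕ) : Prop :=
  ∀ P ∈ primesAbove K p, ∀ Q ∈ primesAbove K p, ramIdx K p P = ramIdx K p Q

/-- `p` satisfies the three conditions of Definition of Γ-fields. -/
def GoodPrime (K : Type*) [Field K] [NumberField K] (p : ℕ) : Prop :=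
  ∃ e : ℕ, (∀ P ∈ primesAbove K p, ramIdx K p P = e) ∧
    Odd ((primesAbove K p).ncard) ∧ Odd (finrank ℚ K / e)

/-- An exceptional prime of `K`: an odd ramified prime failing the Γ conditions. -/
def IsExceptional (K : Type*) [Field K] [NumberField K] (p : ℕ) : Prop :=
  p.Prime ∧ p ≠ 2 ∧ IsRamifiedIn K p ∧ ¬ GoodPrime K p

/-- `K` is a Γ-number field. -/
def IsGammaNumberField (K : Type*) [Field K] [NumberField K] : Prop :=
  IsTame K ∧ {p : ℕ | IsExceptional K p}.Subsingleton

/-- The first ramification invariant `α_p^K`. -/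
noncomputable def alphaInv (K : Type*) [Field K] [NumberField K] (p : ℕ) : ℕ :=
  (∏ᶠ P ∈ primesAbove K p, ramIdx K p P ^ resDeg K p P) *
    (sInf {u : ℕ | ¬ IsSquare ((u : ZMod p))}) ^
      ((∑ᶠ P ∈ primesAbove K p, resDeg K p P) - (primesAbove K p).ncard)

/-- The integral trace forms of `K` and `L` are isometric over `ℤ`. -/
def IntegralTraceIsometric (K L : Type*) [Field K] [NumberField K]
    [Field L] [NumberField L] : Prop :=
  ∃ e : (𝓞 K) ≃ₗ[ℤ] (𝓞 L), ∀ x y : 𝓞 K,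
    Algebra.traceForm ℤ (𝓞 L) (e x) (e y) = Algebra.traceForm ℤ (𝓞 K) x y

noncomputable def nrRealEmb (K : Type*) [Field K] [NumberField K] : ℕ :=
  Nat.card {φ : K →+* ℂ // ComplexEmbedding.IsReal φ}

noncomputable def nrComplexEmb (K : Type*) [Field K] [NumberField K] : ℕ :=
  Nat.card {φ : K →+* ℂ // ¬ ComplexEmbedding.IsReal φ}

def IsTotallyRealField (K : Type*) [Field K] [NumberField K] : Prop :=
  ∀ φ : K →+* ℂ, ComplexEmbedding.IsReal φ
theorem alpha_eq_ram_index_mod_squares (K : Type*) [Field K] [NumberField K]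
    (p : ℕ) (hp : p.Prime) (hp2 : p ≠ 2)
    (htame : ∀ P ∈ primesAbove K p, ¬ (p ∣ ramIdx K p P))
    (e : ℕ) (he : ∀ P ∈ primesAbove K p, ramIdx K p P = e)
    (hg : Odd ((primesAbove K p).ncard))
    (hF : Odd (finrank ℚ K / e)) :
    IsSquare (((alphaInv K p * e : ℕ) : ZMod p)) ∧
      ((alphaInv K p * e : ℕ) : ZMod p) ≠ 0 := by
  classical
  haveI : Fact p.Prime := ⟨hp⟩
  set I : Ideal (𝓞 K) := Ideal.map (algebraMap ℤ (𝓞 K)) (Ideal.span {(p : ℤ)}) with hI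
  have hImap : I = Ideal.span {((p : ℕ) : 𝓞 K)} := by
    rw [hI, Ideal.map_span, Set.image_singleton]
    norm_num
  have hIne : I ≠ ⊥ := by
    rw [hImap, Ne, Ideal.span_singleton_eq_bot, Nat.cast_eq_zero]
    exact hp.ne_zero
  have hle : ∀ P : Ideal (𝓞 K), I ≤ P ↔ ((p : ℕ) : 𝓞 K) ∈ P := fun P => by
    rw [hImap, Ideal.span_singleton_le_iff_mem]
  set T : Finset (Ideal (𝓞 K)) := (UniqueFactorizationMonoid.factors I).toFinset with hT
  have hset : primesAbove K p = ↑T := by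
    ext P
    rw [hT, Finset.mem_coe, Multiset.mem_toFinset, UniqueFactorizationMonoid.factors_eq_normalizedFactors,
      Ideal.mem_normalizedFactors_iff hIne, hle P]
    rfl
  set F : ℕ := ∑ P ∈ T, resDeg K p P with hFdef
  have hg' : (primesAbove K p).ncard = T.card := by rw [hset, Set.ncard_coe_finset]
  have hTne : T.Nonempty := by
    rw [← Finset.card_pos, ← hg']
    exact hg.pos
  obtain ⟨P₀, hP₀⟩ := hTne
  have hP₀' : P₀ ∈ primesAbove K p := by rw [hset]; exact hP₀
  have hpe : ¬ p ∣ e := he P₀ hP₀' ▸ htame P₀ hP₀'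
  have he0 : e ≠ 0 := fun h => hpe (h ▸ dvd_zero p)
  -- fundamental identity
  haveI hmax : (Ideal.span {(p : ℤ)}).IsMaximal := by
    apply PrincipalIdealRing.isMaximal_of_irreducible
    exact (Nat.prime_iff_prime_int.mp hp).irreducible
  have hsum := Ideal.sum_ramification_inertia (R := ℤ) (S := 𝓞 K)
      (p := Ideal.span {(p : ℤ)}) ℚ K
      (by rw [Ne, Ideal.span_singleton_eq_bot]; exact_mod_cast hp.ne_zero)
  have heF : e * F = finrank ℚ K := by
    rw [hFdef, Finset.mul_sum, ← hsum]
    refine Finset.sum_congr rfl fun P hPT => ?_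
    rw [← he P (by rw [hset]; exact hPT)]
    rfl
  have hFodd : Odd F := by
    rwa [← heF, Nat.mul_div_cancel_left _ (Nat.pos_of_ne_zero he0)] at hF
  have hsF : (∑ᶠ P ∈ primesAbove K p, resDeg K p P) = F := by
    rw [hset, finsum_mem_coe_finset]
  have hprod : (∏ᶠ P ∈ primesAbove K p, ramIdx K p P ^ resDeg K p P) = e ^ F := by
    rw [hset, finprod_mem_coe_finset, ← Finset.prod_pow_eq_pow_sum]
    exact Finset.prod_congr rfl fun P hPT => by rw [he P (by rw [hset]; exact hPT)]
  -- the least nonresidue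
  set u : ℕ := sInf {u : ℕ | ¬ IsSquare ((u : ZMod p))} with hu
  have hune : {u : ℕ | ¬ IsSquare ((u : ZMod p))}.Nonempty := by
    obtain ⟨a, ha⟩ := FiniteField.exists_nonsquare (F := ZMod p)
      (by rw [ZMod.ringChar_zmod_n]; exact hp2)
    exact ⟨a.val, by simpa [ZMod.natCast_val, ZMod.cast_id] using ha⟩
  have humem : ¬ IsSquare ((u : ZMod p)) := Nat.sInf_mem hune
  have hu0 : (u : ZMod p) ≠ 0 := fun h => humem (by rw [h]; exact ⟨0, by ring⟩)
  have he0' : ((e : ℕ) : ZMod p) ≠ 0 := by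
    rwa [Ne, ZMod.natCast_eq_zero_iff]
  -- compute alphaInv * e mod p
  have hval : ((alphaInv K p * e : ℕ) : ZMod p)
      = (e : ZMod p) ^ (F + 1) * (u : ZMod p) ^ (F - T.card) := by
    rw [alphaInv, hprod, hsF, ← hu, hg']
    push_cast
    ring
  have heven1 : Even (F + 1) := hFodd.add_one
  have heven2 : Even (F - T.card) := Nat.Odd.sub_odd hFodd (hg' ▸ hg)
  obtain ⟨a, ha⟩ := heven1
  obtain ⟨b, hb⟩ := heven2
  constructor
  · rw [hval, ha, hb, pow_add, pow_add]
    exact ((IsSquare.mul_self _).mul (IsSquare.mul_self _))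
  · rw [hval]
    exact mul_ne_zero (pow_ne_zero _ he0') (pow_ne_zero _ hu0)
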